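/- For every integer j ≥ 3, the inequality 10/(10·k_j + 12 + 5(j−1)(j+3)) < 630·j^{3/2}/(315·j^{3/2}(j+1)² − 504·j^{3/2} + 80·√15) holds, where k_3 = 11/40, k_4 = 5/26, k_5 = 23/130, and k_j = (8/63)·√(15/(2j−1)) for j ≥ 6. -/

import Mathlib

/-!
Cross-multiplying, the polynomial terms in `j` cancel exactly, so the inequality is equivalent
to `8 √15 < 63 k_j j^{3/2}`. For `j ≤ 5` this holds because `63 k_j > 8` and
`j^{3/2} ≥ 3^{3/2} > √15`; for `j ≥ 6` it reduces to `2j - 1 < j^3`.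
-/

open Real

lemma Real.rpow_three_halves_eq_sqrt {t : ℝ} (ht : 0 ≤ t) :
    t ^ ((3 : ℝ) / 2) = √(t ^ 3) := by
  rw [sqrt_eq_rpow, ← rpow_natCast t 3, ← rpow_mul ht]
  norm_num

lemma sqrt_fifteen_lt_rpow_three_halves {t : ℝ} (ht : 3 ≤ t) : √15 < t ^ ((3 : ℝ) / 2) := by
  rw [rpow_three_halves_eq_sqrt (by linarith)]
  apply sqrt_lt_sqrt (by norm_num)
  nlinarith [pow_le_pow_left₀ (by norm_num) ht 3]

lemma sqrt_fifteen_lt_sqrt_div_mul_rpow {t : ℝ} (ht : 1 < t) :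
    √15 < √(15 / (2 * t - 1)) * t ^ ((3 : ℝ) / 2) := by
  have hden : 0 < 2 * t - 1 := by linarith
  have hcube : 2 * t - 1 < t ^ 3 := by nlinarith [mul_pos (sub_pos.2 ht) (sub_pos.2 ht)]
  rw [rpow_three_halves_eq_sqrt (by linarith), ← sqrt_mul (by positivity)]
  apply sqrt_lt_sqrt (by norm_num)
  rw [div_mul_eq_mul_div, lt_div_iff₀ hden]
  nlinarith

lemma ten_div_lt_div_of_mul_lt {k t x c : ℝ} (ht : 1 ≤ t) (hx : 0 < x) (hc : 0 ≤ c)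
    (h : 8 * c < 63 * k * x) :
    10 / (10 * k + 12 + 5 * (t - 1) * (t + 3)) <
      630 * x / (315 * x * (t + 1) ^ 2 - 504 * x + 80 * c) := by
  have hk : 0 < k := (pos_iff_pos_of_mul_pos (by linarith : 0 < k * x)).2 hx
  have hA : 0 < 10 * k + 12 + 5 * (t - 1) * (t + 3) := by nlinarith
  have hB : 0 < 315 * x * (t + 1) ^ 2 - 504 * x + 80 * c := by
    nlinarith [mul_nonneg hx.le (show 0 ≤ (t + 1) ^ 2 - 4 by nlinarith)]
  rw [div_lt_div_iff₀ hA hB]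
  nlinarith

lemma sqrt_fifteen_mul_lt (k : ℕ → ℝ)
    (hk3 : k 3 = 11 / 40) (hk4 : k 4 = 5 / 26) (hk5 : k 5 = 23 / 130)
    (hk : ∀ j : ℕ, 6 ≤ j → k j = (8 / 63) * √(15 / (2 * (j : ℝ) - 1)))
    {j : ℕ} (hj : 3 ≤ j) :
    8 * √15 < 63 * k j * (j : ℝ) ^ ((3 : ℝ) / 2) := by
  rcases lt_or_ge j 6 with hsmall | hlarge
  · have hk_gt : 8 < 63 * k j := by
      interval_cases j <;> norm_num [hk3, hk4, hk5]
    have hx := sqrt_fifteen_lt_rpow_three_halves (t := (j : ℝ)) (by exact_mod_cast hj)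
    exact mul_lt_mul'' hk_gt hx (by norm_num) (sqrt_nonneg _)
  · have hx := sqrt_fifteen_lt_sqrt_div_mul_rpow (t := (j : ℝ))
      (by exact_mod_cast (by omega : 1 < j))
    rw [hk j hlarge]
    linarith

/-- Feng's exponent is smaller than the new exponent of Theorem 1.1, for all `j ≥ 3`. -/
theorem exponent_comparison_feng (k : ℕ → ℝ)
    (hk3 : k 3 = 11 / 40) (hk4 : k 4 = 5 / 26) (hk5 : k 5 = 23 / 130)
    (hk : ∀ j : ℕ, 6 ≤ j → k j = (8 / 63) * Real.sqrt (15 / (2 * (j : ℝ) - 1)))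
    (j : ℕ) (hj : 3 ≤ j) :
    10 / (10 * k j + 12 + 5 * ((j : ℝ) - 1) * ((j : ℝ) + 3)) <
      630 * (j : ℝ) ^ ((3 : ℝ) / 2) /
        (315 * (j : ℝ) ^ ((3 : ℝ) / 2) * ((j : ℝ) + 1) ^ 2
          - 504 * (j : ℝ) ^ ((3 : ℝ) / 2) + 80 * Real.sqrt 15) := by
  have hj' : (3 : ℝ) ≤ j := by exact_mod_cast hj
  exact ten_div_lt_div_of_mul_lt (by linarith) (rpow_pos_of_pos (by linarith) _) (sqrt_nonneg _)
    (sqrt_fifteen_mul_lt k hk3 hk4 hk5 hk hj)
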